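/- arXiv:1404.5221 — 2 statements merged into one kernel-verified Lean document; each statement's English description precedes it below -/
import Mathlib

section
/- Consider the error scheme: grid functions z^0, z^1, …, z^M in the space V of real vectors (z_0, …, z_N) with z_0 = z_N = 0, where z^0 = 0, weights g_s^{j+1} (0 ≤ s ≤ j ≤ M−1) satisfying g_j^{j+1} > g_{j-1}^{j+1} > … > g_0^{j+1} ≥ c₂ > 0 for each j, parameters σ_{j+1} with g_j^{j+1}/(2 g_j^{j+1} − g_{j-1}^{j+1}) ≤ σ_{j+1} ≤ 1 (with g_{-1}^{1} = 0), a linear operator Λ : V → V with (−Λ z, z) ≥ κ ‖z‖₀² for some κ > 0, and residuals ψ^{1}, …, ψ^{M} ∈ V. Suppose Σ_{s=0}^{j} (z^{s+1} − z^s) g_s^{j+1} = Λ(σ_{j+1} z^{j+1} + (1 − σ_{j+1}) z^{j}) + ψ^{j+1} for every j = 0, …, M−1, and suppose ‖ψ^{k}‖₀ ≤ C (N^{−r₁} + M^{−r₂}) for all k and some constant C > 0 and positive reals r₁, r₂. Then ‖z^{j+1}‖₀ ≤ (2 κ c₂)^{−1/2} · max_{1 ≤ k ≤ M} ‖ψ^{k}‖₀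 ≤ C (2 κ c₂)^{−1/2} (N^{−r₁} + M^{−r₂}) for every 0 ≤ j ≤ M−1. -/
/-!
Energy method. For fixed `j` and `w = σ y^{j+1} + (1 - σ) y^j`, summation by parts rewrites
`Σ_s g_s (y^{s+1} - y^s) w - ½ Σ_s g_s ((y^{s+1})² - (y^s)²)` as
`½ Σ_{s ≤ j} (g_s - g_{s-1}) (w - y^s)² - ½ g_j (1 - σ)² (y^{j+1} - y^j)²` with `g_{-1} = 0`.
Keeping only the term `s = j`, where `w - y^j = σ (y^{j+1} - y^j)`, leaves
`½ (y^{j+1} - y^j)² (g_j (2σ - 1) - g_{j-1} σ²)`, which is nonnegative because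
`σ (2 g_j - g_{j-1}) ≥ g_j` and `σ ≤ 1`. Pairing the scheme with `w` and using coercivity of `-Λ`
and Young's inequality gives `Σ_s g_s (E_{s+1} - E_s) ≤ ‖ψ^{j+1}‖₀² / (2κ)` for `E_s = ‖z^s‖₀²`;
a second summation by parts turns this into `E_s ≤ max_k ‖ψ^k‖₀² / (2 κ c₂)` by strong induction.
-/

open Finset

/-- The discrete inner product `(u, w) = Σ_{i=1}^{N-1} u_i w_i h` on grid functions. -/
noncomputable def gridInner (h : ℝ) (N : ℕ) (u w : ℕ → ℝ) : ℝ :=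
  ∑ i ∈ Finset.Ico 1 N, u i * w i * h

theorem sum_range_succ_mul_sub_eq (g f : ℕ → ℝ) (j : ℕ) :
    ∑ s ∈ range (j + 1), g s * (f (s + 1) - f s) =
      g 0 * (f (j + 1) - f 0) + ∑ s ∈ range j, (g (s + 1) - g s) * (f (j + 1) - f (s + 1)) := by
  induction j with
  | zero => simp
  | succ j ih =>
    have hsplit : ∑ s ∈ range j, (g (s + 1) - g s) * (f (j + 2) - f (s + 1)) =
        ∑ s ∈ range j, (g (s + 1) - g s) * (f (j + 1) - f (s + 1)) +
          (∑ s ∈ range j, (g (s + 1) - g s)) * (f (j + 2) - f (j + 1)) := by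
      rw [sum_mul, ← sum_add_distrib]
      exact sum_congr rfl fun s _ => by ring
    rw [sum_range_succ, ih, sum_range_succ _ j, hsplit, sum_range_sub]
    ring

theorem half_sum_mul_sq_sub_le {g : ℕ → ℝ} {σ : ℝ} {j : ℕ} (hmono : MonotoneOn g (Set.Iic j))
    (hg0 : 0 ≤ g 0) (hσ0 : 0 ≤ σ) (hσ1 : σ ≤ 1)
    (hσ : g j ≤ σ * (2 * g j - if j = 0 then 0 else g (j - 1))) (y : ℕ → ℝ) :
    1 / 2 * ∑ s ∈ range (j + 1), g s * (y (s + 1) ^ 2 - y s ^ 2) ≤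
      (∑ s ∈ range (j + 1), (y (s + 1) - y s) * g s) * (σ * y (j + 1) + (1 - σ) * y j) := by
  set w := σ * y (j + 1) + (1 - σ) * y j
  set F : ℕ → ℝ := fun s => y s * w - y s ^ 2 / 2
  have hF : ∀ s, F (j + 1) - F s = ((w - y s) ^ 2 - (y (j + 1) - w) ^ 2) / 2 := fun s => by
    simp only [F]; ring
  have hlast : F (j + 1) - F j = (2 * σ - 1) * (y (j + 1) - y j) ^ 2 / 2 := by
    simp only [F, w]; ring
  have hdiff : (∑ s ∈ range (j + 1), (y (s + 1) - y s) * g s) * w -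
      1 / 2 * ∑ s ∈ range (j + 1), g s * (y (s + 1) ^ 2 - y s ^ 2) =
        ∑ s ∈ range (j + 1), g s * (F (s + 1) - F s) := by
    rw [sum_mul, mul_sum, ← sum_sub_distrib]
    exact sum_congr rfl fun s _ => by simp only [F]; ring
  suffices 0 ≤ ∑ s ∈ range (j + 1), g s * (F (s + 1) - F s) by linarith
  rw [sum_range_succ_mul_sub_eq]
  cases j with
  | zero =>
    simp only [↓reduceIte, sub_zero] at hσ
    simp only [range_zero, sum_empty, add_zero, zero_add, hlast, mul_div_assoc', ← mul_assoc]
    exact div_nonneg (mul_nonneg (by linarith) (sq_nonneg _)) two_pos.le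
  | succ m =>
    simp only [add_eq_zero, one_ne_zero, and_false, ↓reduceIte, add_tsub_cancel_right] at hσ
    have hinc : ∀ s < m + 1, 0 ≤ g (s + 1) - g s := fun s hs =>
      sub_nonneg.2 (hmono (by simp; omega) (by simp; omega) (by omega))
    have hgm : 0 ≤ g m := hg0.trans (hmono (by simp) (by simp) (Nat.zero_le m))
    set R := (y (m + 2) - w) ^ 2 / 2 with hR
    have hlow : ∀ s, -R ≤ F (m + 2) - F s := fun s => by
      rw [hF, hR]; linarith [sq_nonneg (w - y s)]
    have hfirst : -(g 0 * R) ≤ g 0 * (F (m + 2) - F 0) := by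
      rw [← mul_neg]; exact mul_le_mul_of_nonneg_left (hlow 0) hg0
    have hmiddle : -((g m - g 0) * R) ≤
        ∑ s ∈ range m, (g (s + 1) - g s) * (F (m + 2) - F (s + 1)) := by
      rw [← sum_range_sub, sum_mul, ← sum_neg_distrib]
      exact sum_le_sum fun s hs => by
        rw [← mul_neg]
        exact mul_le_mul_of_nonneg_left (hlow (s + 1)) (hinc s (by simp at hs; omega))
    have hcoef : 0 ≤ g (m + 1) * (2 * σ - 1) - g m * σ ^ 2 := by nlinarith [mul_nonneg hσ0 hgm]
    rw [sum_range_succ, hlast]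
    linear_combination hfirst + hmiddle + mul_nonneg hcoef (sq_nonneg (y (m + 2) - y (m + 1))) / 2

theorem half_sum_mul_gridInner_sub_le {h : ℝ} (hh : 0 ≤ h) (N : ℕ) {g : ℕ → ℝ} {σ : ℝ} {j : ℕ}
    (hmono : MonotoneOn g (Set.Iic j)) (hg0 : 0 ≤ g 0) (hσ0 : 0 ≤ σ) (hσ1 : σ ≤ 1)
    (hσ : g j ≤ σ * (2 * g j - if j = 0 then 0 else g (j - 1))) (z : ℕ → ℕ → ℝ) :
    1 / 2 * ∑ s ∈ range (j + 1),
        g s * (gridInner h N (z (s + 1)) (z (s + 1)) - gridInner h N (z s) (z s)) ≤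
      gridInner h N (fun i => ∑ s ∈ range (j + 1), (z (s + 1) i - z s i) * g s)
        (fun i => σ * z (j + 1) i + (1 - σ) * z j i) := by
  have hswap : 1 / 2 * ∑ s ∈ range (j + 1),
      g s * (gridInner h N (z (s + 1)) (z (s + 1)) - gridInner h N (z s) (z s)) =
        ∑ i ∈ Ico 1 N, 1 / 2 * ∑ s ∈ range (j + 1), g s * (z (s + 1) i ^ 2 - z s i ^ 2) * h := by
    simp only [gridInner, ← sum_sub_distrib, mul_sum]
    rw [sum_comm]
    exact sum_congr rfl fun _ _ => sum_congr rfl fun _ _ => by ring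
  rw [hswap]
  exact sum_le_sum fun i _ => by
    simpa only [mul_assoc, sum_mul] using mul_le_mul_of_nonneg_right
      (half_sum_mul_sq_sub_le hmono hg0 hσ0 hσ1 hσ fun s => z s i) hh

theorem gridInner_le_mul_add_div {h κ : ℝ} (hh : 0 ≤ h) (hκ : 0 < κ) (N : ℕ) (u v : ℕ → ℝ) :
    gridInner h N u v ≤ κ * gridInner h N v v + gridInner h N u u / (4 * κ) := by
  simp only [gridInner, mul_sum, sum_div, ← sum_add_distrib]
  refine sum_le_sum fun i _ => ?_
  have hyoung : u i * v i ≤ κ * (v i * v i) + u i * u i / (4 * κ) := by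
    have hsq : κ * (v i * v i) + u i * u i / (4 * κ) - u i * v i =
        (2 * κ * v i - u i) ^ 2 / (4 * κ) := by
      field_simp; ring
    linarith [div_nonneg (sq_nonneg (2 * κ * v i - u i)) (by positivity : (0 : ℝ) ≤ 4 * κ)]
  calc u i * v i * h ≤ (κ * (v i * v i) + u i * u i / (4 * κ)) * h :=
        mul_le_mul_of_nonneg_right hyoung hh
    _ = _ := by ring

theorem gridInner_le_of_coercive {h κ : ℝ} (hh : 0 ≤ h) (hκ : 0 < κ) {N : ℕ} {L A ψ v : ℕ → ℝ}
    (hL : ∀ i ∈ Ico 1 N, L i = A i + ψ i)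
    (hA : κ * gridInner h N v v ≤ gridInner h N (fun i => -A i) v) :
    gridInner h N L v ≤ gridInner h N ψ ψ / (4 * κ) := by
  have hsplit : gridInner h N L v = -gridInner h N (fun i => -A i) v + gridInner h N ψ v := by
    simp only [gridInner, ← sum_neg_distrib, ← sum_add_distrib]
    exact sum_congr rfl fun i hi => by rw [hL i hi]; ring
  linarith [gridInner_le_mul_add_div hh hκ N ψ v]

theorem sum_mul_gridInner_sub_le_of_scheme {h κ : ℝ} (hh : 0 ≤ h) (hκ : 0 < κ) {N : ℕ}
    {g : ℕ → ℝ} {σ : ℝ} {j : ℕ} (hmono : MonotoneOn g (Set.Iic j)) (hg0 : 0 ≤ g 0) (hσ0 : 0 ≤ σ)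
    (hσ1 : σ ≤ 1) (hσ : g j ≤ σ * (2 * g j - if j = 0 then 0 else g (j - 1)))
    {z : ℕ → ℕ → ℝ} {A ψ : ℕ → ℝ}
    (hscheme : ∀ i ∈ Ico 1 N, ∑ s ∈ range (j + 1), (z (s + 1) i - z s i) * g s = A i + ψ i)
    (hA : κ * gridInner h N (fun i => σ * z (j + 1) i + (1 - σ) * z j i)
        (fun i => σ * z (j + 1) i + (1 - σ) * z j i) ≤
      gridInner h N (fun i => -A i) (fun i => σ * z (j + 1) i + (1 - σ) * z j i)) :
    ∑ s ∈ range (j + 1),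
        g s * (gridInner h N (z (s + 1)) (z (s + 1)) - gridInner h N (z s) (z s)) ≤
      gridInner h N ψ ψ / (2 * κ) := by
  have henergy := half_sum_mul_gridInner_sub_le hh N hmono hg0 hσ0 hσ1 hσ z
  have hcoer := gridInner_le_of_coercive hh hκ hscheme hA
  have hhalf : gridInner h N ψ ψ / (4 * κ) = gridInner h N ψ ψ / (2 * κ) / 2 := by
    field_simp; ring
  linarith

theorem le_of_sum_mul_sub_le {g E : ℕ → ℝ} {B : ℝ} {j : ℕ} (hmono : MonotoneOn g (Set.Iic j))
    (hg0 : 0 < g 0) (hE : ∀ s ≤ j, E s ≤ B)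
    (hsum : ∑ s ∈ range (j + 1), g s * (E (s + 1) - E s) ≤ g 0 * (B - E 0)) :
    E (j + 1) ≤ B := by
  by_contra! hB
  rw [sum_range_succ_mul_sub_eq] at hsum
  have hrest : 0 ≤ ∑ s ∈ range j, (g (s + 1) - g s) * (E (j + 1) - E (s + 1)) :=
    sum_nonneg fun s hs => by
      rw [mem_range] at hs
      exact mul_nonneg (sub_nonneg.2 (hmono (by simp; omega) (by simp; omega) (by omega)))
        (by linarith [hE (s + 1) hs])
  nlinarith

theorem forall_le_of_sum_mul_sub_le {g : ℕ → ℕ → ℝ} {E : ℕ → ℝ} {B : ℝ} {M : ℕ}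
    (hmono : ∀ j < M, MonotoneOn (g j) (Set.Iic j)) (hg0 : ∀ j < M, 0 < g j 0) (hE0 : E 0 ≤ B)
    (hstep : ∀ j < M, ∑ s ∈ range (j + 1), g j s * (E (s + 1) - E s) ≤ g j 0 * (B - E 0)) :
    ∀ s ≤ M, E s ≤ B := by
  intro s
  induction s using Nat.strong_induction_on with
  | _ s ih =>
    cases s with
    | zero => exact fun _ => hE0
    | succ j =>
      exact fun hj => le_of_sum_mul_sub_le (hmono j hj) (hg0 j hj)
        (fun s hs => ih s (by omega) (by omega)) (hstep j hj)

theorem nonneg_and_le_mul_of_div_le {g : ℕ → ℝ} {σ : ℝ} {j : ℕ}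
    (hmono : StrictMonoOn g (Set.Iic j)) (hg0 : 0 < g 0)
    (hσ : g j / (2 * g j - if j = 0 then 0 else g (j - 1)) ≤ σ) :
    0 ≤ σ ∧ g j ≤ σ * (2 * g j - if j = 0 then 0 else g (j - 1)) := by
  have hgj : 0 < g j := hg0.trans_le (hmono.monotoneOn (by simp) (by simp) (Nat.zero_le j))
  have hprev : (if j = 0 then 0 else g (j - 1)) ≤ g j := by
    split_ifs
    · exact hgj.le
    · exact hmono.monotoneOn (by simp) (by simp) (Nat.sub_le j 1)
  have hden : 0 < 2 * g j - if j = 0 then 0 else g (j - 1) := by linarith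
  exact ⟨(div_nonneg hgj.le hden.le).trans hσ, (div_le_iff₀ hden).1 hσ⟩

theorem sqrt_le_rpow_neg_half_mul {x a P : ℝ} (ha : 0 < a) (hP : 0 ≤ P) (hx : x ≤ P ^ 2 / a) :
    √x ≤ a ^ (-(1 : ℝ) / 2) * P := by
  rw [show -(1 : ℝ) / 2 = -(1 / 2) by norm_num, Real.rpow_neg ha.le, ← Real.sqrt_eq_rpow]
  calc √x ≤ √(P ^ 2 / a) := Real.sqrt_le_sqrt hx
    _ = (√a)⁻¹ * P := by rw [Real.sqrt_div' _ ha.le, Real.sqrt_sq hP]; ring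

theorem theorem2_convergence_general (l h κ c₂ C r₁ r₂ : ℝ) (N M : ℕ)
    (hM : 0 < M) (hl : 0 < l) (hh : h = l / N)
    (hκ : 0 < κ) (hc₂ : 0 < c₂)
    (g : ℕ → ℕ → ℝ) (σ : ℕ → ℝ) (z ψ : ℕ → ℕ → ℝ)
    (Λ : (ℕ → ℝ) → (ℕ → ℝ))
    (hΛpos : ∀ u : ℕ → ℝ, u 0 = 0 → u N = 0 →
      gridInner h N (fun i => -(Λ u i)) u ≥ κ * gridInner h N u u)
    (hgmono : ∀ j < M, ∀ s < j, g j s < g j (s + 1))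
    (hg0 : ∀ j < M, c₂ ≤ g j 0)
    (hσl : ∀ j < M, g j j / (2 * g j j - if j = 0 then 0 else g j (j - 1)) ≤ σ j)
    (hσu : ∀ j < M, σ j ≤ 1)
    (hbc : ∀ j ≤ M, z j 0 = 0 ∧ z j N = 0)
    (hz0 : ∀ i, z 0 i = 0)
    (hscheme : ∀ j < M, ∀ i, 1 ≤ i → i < N →
      ∑ s ∈ Finset.range (j + 1), (z (s + 1) i - z s i) * g j s =
        Λ (fun x => σ j * z (j + 1) x + (1 - σ j) * z j x) i + ψ (j + 1) i)
    (hψ : ∀ k, 1 ≤ k → k ≤ M →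
      Real.sqrt (gridInner h N (ψ k) (ψ k)) ≤ C * ((N : ℝ) ^ (-r₁) + (M : ℝ) ^ (-r₂))) :
    ∀ j < M,
      Real.sqrt (gridInner h N (z (j + 1)) (z (j + 1))) ≤
        (2 * κ * c₂) ^ (-(1 : ℝ) / 2) *
          (Finset.Icc 1 M).sup' (Finset.nonempty_Icc.mpr hM)
            (fun k => Real.sqrt (gridInner h N (ψ k) (ψ k))) ∧
      (2 * κ * c₂) ^ (-(1 : ℝ) / 2) *
          (Finset.Icc 1 M).sup' (Finset.nonempty_Icc.mpr hM)
            (fun k => Real.sqrt (gridInner h N (ψ k) (ψ k))) ≤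
        C * (2 * κ * c₂) ^ (-(1 : ℝ) / 2) * ((N : ℝ) ^ (-r₁) + (M : ℝ) ^ (-r₂)) := by
  have hh0 : 0 ≤ h := by rw [hh]; exact div_nonneg hl.le (Nat.cast_nonneg N)
  have hmono : ∀ j < M, StrictMonoOn (g j) (Set.Iic j) := fun j hj =>
    strictMonoOn_Iic_of_lt_succ (hgmono j hj)
  have hgpos : ∀ j < M, 0 < g j 0 := fun j hj => hc₂.trans_le (hg0 j hj)
  set P := (Icc 1 M).sup' (nonempty_Icc.mpr hM) fun k => √(gridInner h N (ψ k) (ψ k))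
  have hψP : ∀ k ∈ Icc 1 M, √(gridInner h N (ψ k) (ψ k)) ≤ P := fun k hk =>
    le_sup' (fun k => √(gridInner h N (ψ k) (ψ k))) hk
  have hP : 0 ≤ P := (Real.sqrt_nonneg _).trans (hψP 1 (mem_Icc.2 ⟨le_rfl, hM⟩))
  have hE0 : gridInner h N (z 0) (z 0) = 0 := by simp [gridInner, hz0]
  have hstep : ∀ j < M, ∑ s ∈ range (j + 1), g j s * (gridInner h N (z (s + 1)) (z (s + 1)) -
      gridInner h N (z s) (z s)) ≤ g j 0 * (P ^ 2 / (2 * κ * c₂) - gridInner h N (z 0) (z 0)) := by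
    intro j hj
    obtain ⟨hσ0, hσ⟩ := nonneg_and_le_mul_of_div_le (hmono j hj) (hgpos j hj) (hσl j hj)
    have hψj : gridInner h N (ψ (j + 1)) (ψ (j + 1)) ≤ P ^ 2 :=
      (Real.sqrt_le_iff.1 (hψP (j + 1) (mem_Icc.2 ⟨by omega, hj⟩))).2
    rw [hE0, sub_zero]
    calc _ ≤ gridInner h N (ψ (j + 1)) (ψ (j + 1)) / (2 * κ) :=
          sum_mul_gridInner_sub_le_of_scheme hh0 hκ (hmono j hj).monotoneOn (hgpos j hj).le hσ0
            (hσu j hj) hσ (fun i hi => hscheme j hj i (mem_Ico.1 hi).1 (mem_Ico.1 hi).2)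
            (hΛpos _ (by simp [(hbc j hj.le).1, (hbc (j + 1) hj).1])
              (by simp [(hbc j hj.le).2, (hbc (j + 1) hj).2]))
      _ ≤ P ^ 2 / (2 * κ) := by gcongr
      _ = c₂ * (P ^ 2 / (2 * κ * c₂)) := by field_simp
      _ ≤ g j 0 * (P ^ 2 / (2 * κ * c₂)) := by gcongr; exact hg0 j hj
  have hE := forall_le_of_sum_mul_sub_le (E := fun s => gridInner h N (z s) (z s))
    (fun j hj => (hmono j hj).monotoneOn) hgpos (by rw [hE0]; positivity) hstep
  intro j hj
  refine ⟨sqrt_le_rpow_neg_half_mul (by positivity) hP (hE (j + 1) hj), ?_⟩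
  rw [mul_comm C, mul_assoc _ C]
  exact mul_le_mul_of_nonneg_left (sup'_le _ _ fun k hk => hψ k (mem_Icc.1 hk).1 (mem_Icc.1 hk).2)
    (by positivity)

/-- Theorem 2 (Alikhanov, L2-1_σ paper): convergence of the general difference scheme.
Under the stability hypotheses, if the error scheme starts from `z^0 = 0` and the residuals
satisfy `‖ψ^k‖₀ ≤ C (N^{−r₁} + M^{−r₂})`, then
`‖z^{j+1}‖₀ ≤ (2κc₂)^{−1/2} max_{1≤k≤M} ‖ψ^k‖₀ ≤ C (2κc₂)^{−1/2} (N^{−r₁} + M^{−r₂})`. -/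
theorem theorem2_convergence (l h κ c₂ C r₁ r₂ : ℝ) (N M : ℕ)
    (hN : 0 < N) (hM : 0 < M) (hl : 0 < l) (hh : h = l / N)
    (hκ : 0 < κ) (hc₂ : 0 < c₂) (hC : 0 < C) (hr₁ : 0 < r₁) (hr₂ : 0 < r₂)
    (g : ℕ → ℕ → ℝ) (σ : ℕ → ℝ) (z ψ : ℕ → ℕ → ℝ)
    (Λ : (ℕ → ℝ) → (ℕ → ℝ)) (hΛ : IsLinearMap ℝ Λ)
    (hΛpos : ∀ u : ℕ → ℝ, u 0 = 0 → u N = 0 →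
      gridInner h N (fun i => -(Λ u i)) u ≥ κ * gridInner h N u u)
    (hgmono : ∀ j < M, ∀ s < j, g j s < g j (s + 1))
    (hg0 : ∀ j < M, c₂ ≤ g j 0)
    (hσl : ∀ j < M, g j j / (2 * g j j - if j = 0 then 0 else g j (j - 1)) ≤ σ j)
    (hσu : ∀ j < M, σ j ≤ 1)
    (hbc : ∀ j ≤ M, z j 0 = 0 ∧ z j N = 0)
    (hz0 : ∀ i, z 0 i = 0)
    (hscheme : ∀ j < M, ∀ i, 1 ≤ i → i < N →
      ∑ s ∈ Finset.range (j + 1), (z (s + 1) i - z s i) * g j s =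
        Λ (fun x => σ j * z (j + 1) x + (1 - σ j) * z j x) i + ψ (j + 1) i)
    (hψ : ∀ k, 1 ≤ k → k ≤ M →
      Real.sqrt (gridInner h N (ψ k) (ψ k)) ≤ C * ((N : ℝ) ^ (-r₁) + (M : ℝ) ^ (-r₂))) :
    ∀ j < M,
      Real.sqrt (gridInner h N (z (j + 1)) (z (j + 1))) ≤
        (2 * κ * c₂) ^ (-(1 : ℝ) / 2) *
          (Finset.Icc 1 M).sup' (Finset.nonempty_Icc.mpr hM)
            (fun k => Real.sqrt (gridInner h N (ψ k) (ψ k))) ∧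
      (2 * κ * c₂) ^ (-(1 : ℝ) / 2) *
          (Finset.Icc 1 M).sup' (Finset.nonempty_Icc.mpr hM)
            (fun k => Real.sqrt (gridInner h N (ψ k) (ψ k))) ≤
        C * (2 * κ * c₂) ^ (-(1 : ℝ) / 2) * ((N : ℝ) ^ (-r₁) + (M : ℝ) ^ (-r₂)) :=
  theorem2_convergence_general l h κ c₂ C r₁ r₂ N M hM hl hh hκ hc₂ g σ z ψ Λ hΛpos hgmono hg0 hσl
    hσu hbc hz0 hscheme hψ
end

section
/- Let 0 < α < 1 and σ = 1 − α/2. For every integer s ≥ 1 define κ_s = ((s+σ)^{2−α} − (s−1+σ)^{2−α} − (2−α)(s−1+σ)^{1−α}) / ((2−α)((s+σ)^{1−α} − (s−1+σ)^{1−α})). Then for all s ≥ 1, 1/2 < κ_s < 1/(2−α). -/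
/-! With `β = 1 - α` and `a = s - 1 + σ > 0`, the quantity `κ_s` becomes
`((a+1)^(β+1) - a^(β+1) - (β+1) a^β) / ((β+1) ((a+1)^β - a^β))`, and `x ↦ x^β` is strictly
concave on `[0, ∞)`. The lower bound is then the strict trapezoid inequality
`(a^β + (a+1)^β)/2 < ∫_a^(a+1) x^β dx`: a strictly concave function lies above its chord.
For the upper bound, writing `(a+1)^(β+1) = (a+1) (a+1)^β` reduces it to the strict tangent-line
inequality `(a+1)^β - a^β < β a^(β-1)`, which is Bernoulli's inequality for `(1 + 1/a)^β`. -/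

open Set intervalIntegral

theorem StrictConcaveOn.secant_lt {f : ℝ → ℝ} {s : Set ℝ} (hf : StrictConcaveOn ℝ s f)
    {a b x : ℝ} (ha : a ∈ s) (hb : b ∈ s) (hx : x ∈ Ioo a b) :
    f a + (x - a) / (b - a) * (f b - f a) < f x := by
  obtain ⟨hax, hxb⟩ := hx
  have hab : 0 < b - a := by linarith
  set t := (x - a) / (b - a) with ht
  have ht0 : 0 < t := div_pos (by linarith) hab
  have ht1 : t < 1 := (div_lt_one hab).2 (by linarith)
  have hconv : (1 - t) • a + t • b = x := by
    simp only [smul_eq_mul, ht]; field_simp; ring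
  have := hf.2 ha hb (by linarith : a ≠ b) (by linarith : 0 < 1 - t) ht0 (by ring)
  rw [hconv, smul_eq_mul, smul_eq_mul] at this
  linarith

theorem StrictConcaveOn.trapezoid_lt_integral {f : ℝ → ℝ} {a b : ℝ} (hab : a < b)
    (hf : StrictConcaveOn ℝ (Icc a b) f) (hfc : ContinuousOn f (Icc a b)) :
    (b - a) * ((f a + f b) / 2) < ∫ x in a..b, f x := by
  have ha : a ∈ Icc a b := left_mem_Icc.2 hab.le
  have hb : b ∈ Icc a b := right_mem_Icc.2 hab.le
  have hchord :
      ∫ x in a..b, (f a + (x - a) / (b - a) * (f b - f a)) = (b - a) * ((f a + f b) / 2) := by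
    rw [integral_add intervalIntegrable_const ((by fun_prop : Continuous _).intervalIntegrable _ _),
      integral_mul_const, integral_div, integral_comp_sub_right fun x => x]
    simp only [integral_const, smul_eq_mul, sub_self, integral_id, ne_eq, OfNat.ofNat_ne_zero,
      not_false_eq_true, zero_pow, sub_zero]
    field_simp
    ring
  rw [← hchord]
  refine integral_lt_integral_of_continuousOn_of_le_of_exists_lt hab (by fun_prop) hfc ?_ ?_
  · rintro x ⟨hax, hxb⟩
    rcases hxb.lt_or_eq with hxb | rfl
    · exact (hf.secant_lt ha hb ⟨hax, hxb⟩).le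
    · simp [div_self (sub_pos.2 hab).ne']
  · exact ⟨(a + b) / 2, ⟨by linarith, by linarith⟩, hf.secant_lt ha hb ⟨by linarith, by linarith⟩⟩

theorem rpow_add_sub_rpow_lt {β a h : ℝ} (hβ0 : 0 < β) (hβ1 : β < 1) (ha : 0 < a) (hh : -a ≤ h)
    (hh0 : h ≠ 0) : (a + h) ^ β - a ^ β < β * a ^ (β - 1) * h := by
  have hs : -1 ≤ h / a := by rw [le_div_iff₀ ha]; linarith
  have hbern := rpow_one_add_lt_one_add_mul_self hs (div_ne_zero hh0 ha.ne') hβ0 hβ1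
  have hsplit : a + h = a * (1 + h / a) := by field_simp
  have hpow : a ^ (β - 1) = a ^ β / a := Real.rpow_sub_one ha.ne' β
  rw [hsplit, Real.mul_rpow ha.le (by linarith), hpow]
  have := mul_lt_mul_of_pos_left hbern (Real.rpow_pos_of_pos ha β)
  field_simp at this ⊢
  linarith

theorem rpow_trapezoid_lt {β a b : ℝ} (hβ0 : 0 < β) (hβ1 : β < 1) (ha : 0 ≤ a) (hab : a < b) :
    (b - a) * ((a ^ β + b ^ β) / 2) < (b ^ (β + 1) - a ^ (β + 1)) / (β + 1) := by
  have hconc : StrictConcaveOn ℝ (Icc a b) (· ^ β) :=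
    (Real.strictConcaveOn_rpow hβ0 hβ1).subset (Icc_subset_Ici_iff hab.le |>.2 ha) (convex_Icc a b)
  have hcont : ContinuousOn (· ^ β) (Icc a b) :=
    continuousOn_id.rpow_const fun _ _ => Or.inr hβ0.le
  simpa [integral_rpow (Or.inl (by linarith : (-1 : ℝ) < β))] using
    hconc.trapezoid_lt_integral hab hcont

noncomputable def kappa (β a : ℝ) : ℝ :=
  ((a + 1) ^ (β + 1) - a ^ (β + 1) - (β + 1) * a ^ β) / ((β + 1) * ((a + 1) ^ β - a ^ β))

theorem kappa_bounds {β a : ℝ} (hβ0 : 0 < β) (hβ1 : β < 1) (ha : 0 < a) :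
    1 / 2 < kappa β a ∧ kappa β a < 1 / (β + 1) := by
  have hβ : 0 < β + 1 := by linarith
  have hD : 0 < (β + 1) * ((a + 1) ^ β - a ^ β) :=
    mul_pos hβ (sub_pos.2 (Real.rpow_lt_rpow ha.le (lt_add_one a) hβ0))
  unfold kappa
  constructor
  · have htrap := rpow_trapezoid_lt hβ0 hβ1 ha.le (lt_add_one a)
    rw [add_sub_cancel_left, one_mul, lt_div_iff₀ hβ] at htrap
    rw [lt_div_iff₀ hD]
    linarith
  · have htangent := rpow_add_sub_rpow_lt hβ0 hβ1 ha (by linarith) one_ne_zero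
    have hmul : a * ((a + 1) ^ β - a ^ β) < β * a ^ β := calc
      _ < a * (β * a ^ (β - 1) * 1) := mul_lt_mul_of_pos_left htangent ha
      _ = β * a ^ β := by rw [Real.rpow_sub_one ha.ne']; field_simp
    have hnum : (a + 1) ^ (β + 1) - a ^ (β + 1) - (β + 1) * a ^ β < (a + 1) ^ β - a ^ β := by
      rw [Real.rpow_add_one (by linarith) β, Real.rpow_add_one ha.ne' β]
      linarith
    rw [div_lt_div_iff₀ hD hβ]
    linarith [mul_lt_mul_of_pos_right hnum hβ]

/-- Lemma 3 (Alikhanov, L2-1_σ paper): for `0 < α < 1`, `σ = 1 − α/2` and every integer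
`s ≥ 1`, the quantity
`κ_s = ((s+σ)^{2−α} − (s−1+σ)^{2−α} − (2−α)(s−1+σ)^{1−α}) / ((2−α)((s+σ)^{1−α} − (s−1+σ)^{1−α}))`
satisfies `1/2 < κ_s < 1/(2−α)`. -/
theorem kappa_s_bounds (α σ : ℝ) (hα0 : 0 < α) (hα1 : α < 1) (hσ : σ = 1 - α / 2)
    (s : ℕ) (hs : 1 ≤ s) :
    1 / 2 < (((s : ℝ) + σ) ^ (2 - α) - ((s : ℝ) - 1 + σ) ^ (2 - α) -
          (2 - α) * ((s : ℝ) - 1 + σ) ^ (1 - α)) /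
        ((2 - α) * (((s : ℝ) + σ) ^ (1 - α) - ((s : ℝ) - 1 + σ) ^ (1 - α))) ∧
      (((s : ℝ) + σ) ^ (2 - α) - ((s : ℝ) - 1 + σ) ^ (2 - α) -
          (2 - α) * ((s : ℝ) - 1 + σ) ^ (1 - α)) /
        ((2 - α) * (((s : ℝ) + σ) ^ (1 - α) - ((s : ℝ) - 1 + σ) ^ (1 - α))) < 1 / (2 - α) := by
  have hs' : (1 : ℝ) ≤ s := by exact_mod_cast hs
  have ha : 0 < (s : ℝ) - 1 + σ := by rw [hσ]; linarith
  rw [show (2 : ℝ) - α = 1 - α + 1 by ring, show (s : ℝ) + σ = (s : ℝ) - 1 + σ + 1 by ring]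
  exact kappa_bounds (by linarith) (by linarith) ha
end
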